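/- arXiv:2507.04030 — 5 statements merged into one kernel-verified Lean document; each statement's English description precedes it below -/
import Mathlib

section
/- Let v_1, ..., v_n (n ≥ 2) be independent nonnegative real-valued random variables with finite expectations, and define WEL = E[max_i v_i], SPA = E[second-max_i v_i], w_i, s_i, r_i as in the second-price auction decomposition (with a fixed tie-breaking rule). Then for every i: SPA ≤ r_i ≤ WEL ≤ r_i + w_i ≤ 2·WEL. -/
/-!
All four inequalities already hold pointwise, for every outcome `ω`, between the integrands
(the second highest bid, the highest bid other than `i`, the highest bid, and `i`'s bid on the
event that `i` wins); integrating them gives the claim. Since the bids are nonnegative, the value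
`0` that Lean assigns to a supremum over an empty index type never breaks these inequalities.
-/

open MeasureTheory ProbabilityTheory

section Pointwise

variable {ι : Type*} [Finite ι] {x : ι → ℝ}

lemma iSup_min_ne_le_iSup_ne (hx : ∀ j, 0 ≤ x j) (i : ι) :
    ⨆ p : {p : ι × ι // p.1 ≠ p.2}, min (x p.1.1) (x p.1.2) ≤ ⨆ j : {j : ι // j ≠ i}, x j := by
  refine Real.iSup_le (fun ⟨⟨a, b⟩, hab⟩ => ?_) (Real.iSup_nonneg fun j => hx j)
  by_cases ha : a = i
  · have hb : b ≠ i := fun hb => hab (ha.trans hb.symm)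
    exact (min_le_right _ _).trans (Finite.le_ciSup (fun j : {j : ι // j ≠ i} => x j) ⟨b, hb⟩)
  · exact (min_le_left _ _).trans (Finite.le_ciSup (fun j : {j : ι // j ≠ i} => x j) ⟨a, ha⟩)

lemma iSup_ne_le_iSup (hx : ∀ j, 0 ≤ x j) (i : ι) :
    ⨆ j : {j : ι // j ≠ i}, x j ≤ ⨆ j, x j :=
  Real.iSup_le (fun j => Finite.le_ciSup x j) (Real.iSup_nonneg hx)

lemma iSup_le_iSup_ne_add_ite [DecidableEq ι] (hx : ∀ j, 0 ≤ x j) {k : ι} (hk : ∀ j, x j ≤ x k)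
    (i : ι) :
    ⨆ j, x j ≤ (⨆ j : {j : ι // j ≠ i}, x j) + if k = i then x i else 0 := by
  have hmax : ⨆ j, x j ≤ x k := Real.iSup_le hk ((hx k).trans (hk k))
  by_cases hki : k = i
  · rw [if_pos hki, ← hki]
    exact hmax.trans (le_add_of_nonneg_left (Real.iSup_nonneg fun j => hx j))
  · rw [if_neg hki, add_zero]
    exact hmax.trans (Finite.le_ciSup (fun j : {j : ι // j ≠ i} => x j) ⟨k, hki⟩)

lemma ite_le_iSup [DecidableEq ι] (hx : ∀ j, 0 ≤ x j) (k i : ι) :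
    (if k = i then x i else 0) ≤ ⨆ j, x j := by
  split_ifs
  · exact Finite.le_ciSup x i
  · exact Real.iSup_nonneg hx

end Pointwise

lemma abs_iSup_le_sum_abs {ι : Type*} [Fintype ι] (x : ι → ℝ) :
    |⨆ j, x j| ≤ ∑ j, |x j| := by
  have hsum : ∀ j, |x j| ≤ ∑ k, |x k| := fun j =>
    Finset.single_le_sum (fun k _ => abs_nonneg (x k)) (Finset.mem_univ j)
  refine abs_le.2 ⟨?_, Real.iSup_le (fun j => (le_abs_self _).trans (hsum j)) (by positivity)⟩
  rcases isEmpty_or_nonempty ι with _ | ⟨⟨j⟩⟩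
  · simp [Real.iSup_of_isEmpty]
  · exact (neg_le_neg (hsum j)).trans ((neg_abs_le _).trans (Finite.le_ciSup x j))

namespace MeasureTheory

variable {Ω : Type*} [MeasurableSpace Ω] {μ : Measure Ω}

lemma Integrable.iSup_of_finite {ι : Type*} [Finite ι] {f : ι → Ω → ℝ}
    (hf : ∀ j, Integrable (f j) μ) : Integrable (fun ω => ⨆ j, f j ω) μ := by
  have := Fintype.ofFinite ι
  refine (integrable_finsetSum Finset.univ fun j _ => (hf j).abs).mono'
    (AEMeasurable.iSup fun j => (hf j).aemeasurable).aestronglyMeasurable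
    (Filter.Eventually.of_forall fun ω => ?_)
  simpa only [Real.norm_eq_abs, Finset.sum_apply] using abs_iSup_le_sum_abs fun j => f j ω

end MeasureTheory

theorem stmt3_general {Ω : Type*} [MeasurableSpace Ω] (μ : Measure Ω) [IsProbabilityMeasure μ]
    (n : ℕ) (v : Fin n → Ω → ℝ)
    (hnonneg : ∀ i ω, 0 ≤ v i ω)
    (hint : ∀ i, Integrable (v i) μ)
    (win : Ω → Fin n) (hwin_meas : Measurable win)
    (hwin : ∀ ω i, v i ω ≤ v (win ω) ω)
    (w r : Fin n → ℝ)
    (hw : ∀ i, w i = ∫ ω, (if win ω = i then v i ω else 0) ∂μ)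
    (hr : ∀ i, r i = ∫ ω, (⨆ j : {j : Fin n // j ≠ i}, v j ω) ∂μ)
    (WEL SPA : ℝ)
    (hWEL : WEL = ∫ ω, (⨆ i, v i ω) ∂μ)
    (hSPA : SPA = ∫ ω, (⨆ p : {p : Fin n × Fin n // p.1 ≠ p.2},
      min (v (↑p : Fin n × Fin n).1 ω) (v (↑p : Fin n × Fin n).2 ω)) ∂μ) :
    ∀ i, SPA ≤ r i ∧ r i ≤ WEL ∧ WEL ≤ r i + w i ∧ r i + w i ≤ 2 * WEL := by
  intro i
  have hSPA_int := Integrable.iSup_of_finite fun p : {p : Fin n × Fin n // p.1 ≠ p.2} =>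
    (hint p.1.1).inf (hint p.1.2)
  have hr_int := Integrable.iSup_of_finite fun j : {j : Fin n // j ≠ i} => hint j
  have hWEL_int := Integrable.iSup_of_finite hint
  have hw_int : Integrable (fun ω => if win ω = i then v i ω else 0) μ := by
    refine ((hint i).indicator (hwin_meas (measurableSet_singleton i))).congr
      (.of_forall fun ω => ?_)
    by_cases h : win ω = i <;> simp [h]
  rw [hr, hw, hWEL, hSPA]
  refine ⟨integral_mono hSPA_int hr_int fun ω => iSup_min_ne_le_iSup_ne (hnonneg · ω) i,
    integral_mono hr_int hWEL_int fun ω => iSup_ne_le_iSup (hnonneg · ω) i, ?_, ?_⟩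
  · rw [← integral_add hr_int hw_int]
    exact integral_mono hWEL_int (hr_int.add hw_int) fun ω =>
      iSup_le_iSup_ne_add_ite (hnonneg · ω) (hwin ω) i
  · rw [← integral_add hr_int hw_int, ← integral_const_mul]
    exact integral_mono (hr_int.add hw_int) (hWEL_int.const_mul 2) fun ω => by
      linarith [iSup_ne_le_iSup (hnonneg · ω) i, ite_le_iSup (hnonneg · ω) (win ω) i]

theorem stmt3 {Ω : Type*} [MeasurableSpace Ω] (μ : Measure Ω) [IsProbabilityMeasure μ]
    (n : ℕ) (hn : 2 ≤ n) (v : Fin n → Ω → ℝ)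
    (hmeas : ∀ i, Measurable (v i)) (hnonneg : ∀ i ω, 0 ≤ v i ω)
    (hint : ∀ i, Integrable (v i) μ)
    (hindep : iIndepFun v μ)
    (win : Ω → Fin n) (hwin_meas : Measurable win)
    (hwin : ∀ ω i, v i ω ≤ v (win ω) ω)
    (w s r : Fin n → ℝ)
    (hw : ∀ i, w i = ∫ ω, (if win ω = i then v i ω else 0) ∂μ)
    (hs : ∀ i, s i = ∫ ω, (if win ω = i then ⨆ j : {j : Fin n // j ≠ i}, v j ω else 0) ∂μ)
    (hr : ∀ i, r i = ∫ ω, (⨆ j : {j : Fin n // j ≠ i}, v j ω) ∂μ)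
    (WEL SPA : ℝ)
    (hWEL : WEL = ∫ ω, (⨆ i, v i ω) ∂μ)
    (hSPA : SPA = ∫ ω, (⨆ p : {p : Fin n × Fin n // p.1 ≠ p.2},
      min (v (↑p : Fin n × Fin n).1 ω) (v (↑p : Fin n × Fin n).2 ω)) ∂μ) :
    ∀ i, SPA ≤ r i ∧ r i ≤ WEL ∧ WEL ≤ r i + w i ∧ r i + w i ≤ 2 * WEL :=
  stmt3_general μ n v hnonneg hint win hwin_meas hwin w r hw hr WEL SPA hWEL hSPA
end

section
/- Let n ≥ 2, ε = 1/(4n), and let v_1, ..., v_n be independent, where each v_i takes value 1/(2^{j_i}·ε) with probability ε and 0 otherwise, with j_i ∈ {1, ..., L}. Then E[second-max_i v_i] ≥ C(n,2)·ε²·(1-ε)^{n-2}·(1/(2^L ε)) ≥ (3/32)·(n-1)/2^L. -/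
/-!
On the event that exactly two of the `v i` are positive, which by independence has probability
`C(n,2) ε² (1-ε)^(n-2)`, the second maximum is the smaller of two positive values and hence at
least `1/(2^L ε)`; integrating over this event gives the first bound. The second one is
arithmetic, using Bernoulli's inequality `(1-ε)^(n-2) ≥ 1 - nε = 3/4`.
-/

open MeasureTheory ProbabilityTheory Finset

section Hits

variable {Ω ι : Type*} {β : ι → Type*} {X : ∀ i, Ω → β i} {T : ∀ i, Set (β i)}

lemma measurableSet_ite_compl [DecidableEq ι] [∀ i, MeasurableSpace (β i)]
    (hT : ∀ i, MeasurableSet (T i)) (s : Finset ι) (i : ι) :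
    MeasurableSet (if i ∈ s then T i else (T i)ᶜ) := by
  split_ifs
  exacts [hT i, (hT i).compl]

variable [Fintype ι]

open Classical in
noncomputable def hits (X : ∀ i, Ω → β i) (T : ∀ i, Set (β i)) (ω : Ω) : Finset ι :=
  univ.filter fun i => X i ω ∈ T i

@[simp]
lemma mem_hits {i : ι} {ω : Ω} : i ∈ hits X T ω ↔ X i ω ∈ T i := by
  simp [hits]

lemma setOf_card_hits_eq (k : ℕ) :
    {ω | #(hits X T ω) = k} = ⋃ s ∈ powersetCard k univ, {ω | hits X T ω = s} := by
  ext ω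
  simp [mem_powersetCard]

variable [DecidableEq ι]

lemma setOf_hits_eq (s : Finset ι) :
    {ω | hits X T ω = s} = ⋂ i, X i ⁻¹' (if i ∈ s then T i else (T i)ᶜ) := by
  ext ω
  simp only [Set.mem_ofPred_eq, Set.mem_iInter, Set.mem_preimage, Finset.ext_iff, mem_hits]
  refine forall_congr' fun i => ?_
  split_ifs with hi <;> simp [hi]

variable [MeasurableSpace Ω] [∀ i, MeasurableSpace (β i)]

lemma measurableSet_setOf_hits_eq (hX : ∀ i, Measurable (X i)) (hT : ∀ i, MeasurableSet (T i))
    (s : Finset ι) : MeasurableSet {ω | hits X T ω = s} := by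
  rw [setOf_hits_eq]
  exact .iInter fun i => hX i (measurableSet_ite_compl hT s i)

variable {μ : Measure Ω} [IsProbabilityMeasure μ] {p : ℝ}

lemma measureReal_setOf_hits_eq (hindep : iIndepFun X μ) (hX : ∀ i, Measurable (X i))
    (hT : ∀ i, MeasurableSet (T i)) (hp : ∀ i, μ.real (X i ⁻¹' T i) = p) (s : Finset ι) :
    μ.real {ω | hits X T ω = s} = p ^ #s * (1 - p) ^ (Fintype.card ι - #s) := by
  have hfactor (i : ι) :
      μ.real (X i ⁻¹' if i ∈ s then T i else (T i)ᶜ) = if i ∈ s then p else 1 - p := by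
    split_ifs
    · exact hp i
    · rw [Set.preimage_compl, probReal_compl_eq_one_sub (hX i (hT i)), hp]
  have hprod := hindep.measure_inter_preimage_eq_mul univ fun i _ =>
    measurableSet_ite_compl hT s i
  simp only [mem_univ, Set.iInter_true] at hprod
  rw [setOf_hits_eq, measureReal_def, hprod, ENNReal.toReal_prod]
  simp only [← measureReal_def, hfactor, prod_ite, prod_const,
    filter_mem_eq_of_subset (subset_univ s), filter_notMem_eq_sdiff, ← compl_eq_univ_sdiff,
    card_compl]

lemma measurableSet_setOf_card_hits_eq (hX : ∀ i, Measurable (X i))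
    (hT : ∀ i, MeasurableSet (T i)) (k : ℕ) : MeasurableSet {ω | #(hits X T ω) = k} := by
  rw [setOf_card_hits_eq]
  exact .biUnion (powersetCard k univ).countable_toSet fun s _ =>
    measurableSet_setOf_hits_eq hX hT s

lemma measureReal_card_hits_eq (hindep : iIndepFun X μ) (hX : ∀ i, Measurable (X i))
    (hT : ∀ i, MeasurableSet (T i)) (hp : ∀ i, μ.real (X i ⁻¹' T i) = p) (k : ℕ) :
    μ.real {ω | #(hits X T ω) = k} =
      (Fintype.card ι).choose k * p ^ k * (1 - p) ^ (Fintype.card ι - k) := by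
  have hdisj : (powersetCard k (univ : Finset ι) : Set (Finset ι)).PairwiseDisjoint
      fun s => {ω | hits X T ω = s} :=
    fun s _ t _ hst => Set.disjoint_left.mpr fun ω hs ht => hst (hs.symm.trans ht)
  rw [setOf_card_hits_eq,
    measureReal_biUnion_finset hdisj fun s _ => measurableSet_setOf_hits_eq hX hT s,
    sum_congr rfl fun s hs => by
    rw [measureReal_setOf_hits_eq hindep hX hT hp, (mem_powersetCard.mp hs).2],
    sum_const, card_powersetCard, card_univ, nsmul_eq_mul, mul_assoc]

end Hits

section SecondMax

variable {ι : Type*}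

/-- For `2 ≤ card ι` this is the second largest of the values `x i`. -/
noncomputable def secondMax (x : ι → ℝ) : ℝ :=
  ⨆ p : {p : ι × ι // p.1 ≠ p.2}, min (x p.1.1) (x p.1.2)

lemma secondMax_nonneg {x : ι → ℝ} (hx : 0 ≤ x) : 0 ≤ secondMax x :=
  Real.iSup_nonneg fun _ => le_min (hx _) (hx _)

lemma le_secondMax_of_one_lt_card [Finite ι] {x : ι → ℝ} {s : Finset ι} (hs : 1 < #s) {m : ℝ}
    (hm : ∀ i ∈ s, m ≤ x i) : m ≤ secondMax x := by
  obtain ⟨i, hi, j, hj, hij⟩ := one_lt_card.mp hs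
  exact (le_min (hm i hi) (hm j hj)).trans <|
    le_ciSup (f := fun p : {p : ι × ι // p.1 ≠ p.2} => min (x p.1.1) (x p.1.2))
      (Set.finite_range _).bddAbove ⟨(i, j), hij⟩

end SecondMax

lemma mul_measureReal_le_integral {Ω : Type*} [MeasurableSpace Ω] {μ : Measure Ω}
    [IsFiniteMeasure μ] {f : Ω → ℝ} (hf : Integrable f μ) (hf0 : 0 ≤ f) {s : Set Ω}
    (hs : MeasurableSet s) {c : ℝ} (hc : ∀ ω ∈ s, c ≤ f ω) : c * μ.real s ≤ ∫ ω, f ω ∂μ :=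
  (setIntegral_ge_of_const_le_real hs (measure_ne_top μ s) hc hf.integrableOn).trans
    (setIntegral_le_integral hf (.of_forall hf0))

lemma three_quarters_le_one_sub_pow (n : ℕ) : (3 / 4 : ℝ) ≤ (1 - 1 / (4 * n)) ^ (n - 2) := by
  rcases Nat.eq_zero_or_pos n with rfl | hn
  · norm_num
  set ε : ℝ := 1 / (4 * n) with hε_def
  have hn1 : (1 : ℝ) ≤ n := by exact_mod_cast hn
  have hnε : n * ε = 1 / 4 := by rw [hε_def]; field_simp
  have hε : 0 ≤ ε := by positivity
  have hsub : ((n - 2 : ℕ) : ℝ) ≤ n := by exact_mod_cast n.sub_le 2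
  have hbernoulli := one_add_mul_le_pow (a := -ε) (by nlinarith) (n - 2)
  rw [← sub_eq_add_neg] at hbernoulli
  nlinarith

theorem stmt12_general {Ω : Type*} [MeasurableSpace Ω] (μ : Measure Ω) [IsProbabilityMeasure μ]
    (n L : ℕ) (hn : 2 ≤ n) (ε : ℝ) (hε : ε = 1 / (4 * n))
    (jdx : Fin n → ℕ) (hjdx : ∀ i, jdx i ∈ Finset.Icc 1 L)
    (v : Fin n → Ω → ℝ) (hmeas : ∀ i, Measurable (v i))
    (hval : ∀ i ω, v i ω = 1 / ((2:ℝ) ^ (jdx i) * ε) ∨ v i ω = 0)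
    (hprob : ∀ i, μ {ω | v i ω = 1 / ((2:ℝ) ^ (jdx i) * ε)} = ENNReal.ofReal ε)
    (hindep : iIndepFun v μ)
    (hint : Integrable (fun ω => ⨆ p : {p : Fin n × Fin n // p.1 ≠ p.2},
      min (v (↑p : Fin n × Fin n).1 ω) (v (↑p : Fin n × Fin n).2 ω)) μ) :
    (n.choose 2 : ℝ) * ε ^ 2 * (1 - ε) ^ (n - 2) * (1 / ((2:ℝ) ^ L * ε)) ≤
      (∫ ω, (⨆ p : {p : Fin n × Fin n // p.1 ≠ p.2},
        min (v (↑p : Fin n × Fin n).1 ω) (v (↑p : Fin n × Fin n).2 ω)) ∂μ) ∧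
    (3 / 32) * ((n : ℝ) - 1) / 2 ^ L ≤
      (n.choose 2 : ℝ) * ε ^ 2 * (1 - ε) ^ (n - 2) * (1 / ((2:ℝ) ^ L * ε)) := by
  have hn0 : (0 : ℝ) < n := by exact_mod_cast (by omega : 0 < n)
  have hε0 : 0 < ε := by rw [hε]; positivity
  set c : Fin n → ℝ := fun i => 1 / ((2:ℝ) ^ jdx i * ε)
  have hv0 (i : Fin n) (ω : Ω) : 0 ≤ v i ω := by
    rcases hval i ω with h | h <;> rw [h]
    positivity
  have hmc (i : Fin n) : 1 / ((2:ℝ) ^ L * ε) ≤ c i := by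
    show _ ≤ 1 / ((2:ℝ) ^ jdx i * ε)
    gcongr
    exacts [one_le_two, (mem_Icc.mp (hjdx i)).2]
  have hp (i : Fin n) : μ.real (v i ⁻¹' {c i}) = ε :=
    (congrArg ENNReal.toReal (hprob i)).trans (ENNReal.toReal_ofReal hε0.le)
  have hpairs := measureReal_card_hits_eq hindep hmeas (fun i => measurableSet_singleton (c i)) hp 2
  rw [Fintype.card_fin] at hpairs
  refine ⟨?_, ?_⟩
  · calc _ = 1 / (2 ^ L * ε) * μ.real {ω | #(hits v (fun i => {c i}) ω) = 2} := by
          rw [hpairs]; ring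
      _ ≤ ∫ ω, secondMax (v · ω) ∂μ :=
        mul_measureReal_le_integral hint (fun ω => secondMax_nonneg (hv0 · ω))
          (measurableSet_setOf_card_hits_eq hmeas (fun i => measurableSet_singleton (c i)) 2)
          fun ω hω => le_secondMax_of_one_lt_card (x := (v · ω)) (s := hits v (fun i => {c i}) ω)
            (by rw [hω]; norm_num) fun i hi =>
              (hmc i).trans_eq (mem_hits.mp hi).symm
  · subst hε
    calc (3 / 32) * ((n : ℝ) - 1) / 2 ^ L
        = n.choose 2 * (1 / (4 * n)) ^ 2 * (1 / (2 ^ L * (1 / (4 * n)))) * (3 / 4) := by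
          rw [Nat.cast_choose_two]; field_simp; ring
      _ ≤ n.choose 2 * (1 / (4 * n)) ^ 2 * (1 / (2 ^ L * (1 / (4 * n)))) *
            (1 - 1 / (4 * n)) ^ (n - 2) := by
          gcongr; exact three_quarters_le_one_sub_pow n
      _ = _ := by ring

theorem stmt12 {Ω : Type*} [MeasurableSpace Ω] (μ : Measure Ω) [IsProbabilityMeasure μ]
    (n L : ℕ) (hn : 2 ≤ n) (hL : 1 ≤ L) (ε : ℝ) (hε : ε = 1 / (4 * n))
    (jdx : Fin n → ℕ) (hjdx : ∀ i, jdx i ∈ Finset.Icc 1 L)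
    (v : Fin n → Ω → ℝ) (hmeas : ∀ i, Measurable (v i))
    (hval : ∀ i ω, v i ω = 1 / ((2:ℝ) ^ (jdx i) * ε) ∨ v i ω = 0)
    (hprob : ∀ i, μ {ω | v i ω = 1 / ((2:ℝ) ^ (jdx i) * ε)} = ENNReal.ofReal ε)
    (hindep : iIndepFun v μ)
    (hint : Integrable (fun ω => ⨆ p : {p : Fin n × Fin n // p.1 ≠ p.2},
      min (v (↑p : Fin n × Fin n).1 ω) (v (↑p : Fin n × Fin n).2 ω)) μ) :
    (n.choose 2 : ℝ) * ε ^ 2 * (1 - ε) ^ (n - 2) * (1 / ((2:ℝ) ^ L * ε)) ≤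
      (∫ ω, (⨆ p : {p : Fin n × Fin n // p.1 ≠ p.2},
        min (v (↑p : Fin n × Fin n).1 ω) (v (↑p : Fin n × Fin n).2 ω)) ∂μ) ∧
    (3 / 32) * ((n : ℝ) - 1) / 2 ^ L ≤
      (n.choose 2 : ℝ) * ε ^ 2 * (1 - ε) ^ (n - 2) * (1 / ((2:ℝ) ^ L * ε)) :=
  stmt12_general μ n L hn ε hε jdx hjdx v hmeas hval hprob hindep hint
end

section
/- Let M^S be a bid-reporting mechanism that is incentive compatible (truthful bidding maximizes interim expected utility for every value and every opponent bid profile), and let τ_i be arbitrary threshold functions depending only on the reported distributions of buyers other than i. Then in the threshold-augmented mechanism TAM_{M^S, τ}, for every buyer i with true value distribution F_i and every profile B_{-i} of opponents' reported distributions: U_i(F_i, B_{-i}; F_i) = max{U_i^{M^S}(F_i, B_{-i}; F_i) - τ_i(B_{-i}), 0} ≥ U_i(B_i, B_{-i}; F_i) for every report B_i, and U_i(F_i, B_{-i}; F_i) ≥ 0. -/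
theorem stmt15 (n : ℕ) (Dist : Fin n → Type*)
    (US : ∀ i : Fin n, (∀ j, Dist j) → Dist i → ℝ)
    (hIC : ∀ (i : Fin n) (B : ∀ j, Dist j) (Fi : Dist i),
      US i B Fi ≤ US i (Function.update B i Fi) Fi)
    (τ : Fin n → (∀ j, Dist j) → ℝ)
    (hτ : ∀ (i : Fin n) (B B' : ∀ j, Dist j),
      (∀ j, j ≠ i → B j = B' j) → τ i B = τ i B')
    (U : ∀ i : Fin n, (∀ j, Dist j) → Dist i → ℝ)
    (hU : ∀ (i : Fin n) (B : ∀ j, Dist j) (Fi : Dist i),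
      U i B Fi = if τ i B ≤ US i B (B i) then US i B Fi - τ i B else 0) :
    ∀ (i : Fin n) (B : ∀ j, Dist j) (Fi : Dist i),
      U i (Function.update B i Fi) Fi
        = max (US i (Function.update B i Fi) Fi - τ i (Function.update B i Fi)) 0 ∧
      (∀ Bi : Dist i, U i (Function.update B i Bi) Fi ≤ U i (Function.update B i Fi) Fi) ∧
      0 ≤ U i (Function.update B i Fi) Fi := by
  intro i B Fi
  have hmax : U i (Function.update B i Fi) Fi
      = max (US i (Function.update B i Fi) Fi - τ i (Function.update B i Fi)) 0 := by
    rw [hU, Function.update_self]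
    rcases le_or_gt (τ i (Function.update B i Fi)) (US i (Function.update B i Fi) Fi) with h | h
    · rw [if_pos h, max_eq_left (by linarith)]
    · rw [if_neg (not_le.mpr h), max_eq_right (by linarith)]
  refine ⟨hmax, ?_, by rw [hmax]; exact le_max_right _ _⟩
  intro Bi
  rw [hmax]
  have hτeq : τ i (Function.update B i Bi) = τ i (Function.update B i Fi) := by
    apply hτ
    intro j hj
    simp [Function.update_of_ne hj]
  rw [hU, Function.update_self]
  split_ifs with h
  · refine le_max_of_le_left ?_
    rw [← hτeq]
    have := hIC i (Function.update B i Bi) Fi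
    rw [Function.update_idem] at this
    linarith
  · exact le_max_right _ _
end

section
/- Let K ≥ 1 and n ≥ 2 be integers and L = ⌈log₂(4n)⌉. Suppose nonnegative reals w_1,...,w_n, s_1,...,s_n, r_1,...,r_n satisfy: s_i ≤ w_i for all i, r_i = s_i + ∑_{j≠i} w_j for all i, and let W = ∑_i w_i, S = ∑_i s_i. Define A = {0, 2^{-L}, ..., 1/2, 1, 2, ..., 2^K} and REV(α) = ∑_i 1[w_i ≥ s_i + α·r_i]·(s_i + α·r_i). Then (1/2)·REV(2^{K+1}) + (1/(2(K+L+1)))·∑_{α∈A} REV(α) ≥ min{W/(8(K+L+1)), 2^K·S}. -/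
/-!
Every peer maximum `r i` lies between `S = ∑ s` and `W = ∑ w`. If some buyer accepts the top
price `s i + 2^(K+1) r i`, that payment alone is at least `2^(K+1) S`. Otherwise every buyer who
accepts the finest price (multiplier `2^(-L)`) also accepts some grid price in `[w i / 2, w i]`,
since doubling the multiplier at most doubles the price. As `n · 2^(-L) ≤ 1/4`, the buyers
rejecting the finest price carry weight at most `S + W / 4`, so the grid revenue is at least
`(3W/4 - S) / 2`; it is also at least `REV 0 = S`, hence at least `W / 4`.
-/

open Finset

theorem Int.exists_mem_Icc_and_not_add_one {P : ℤ → Prop} {a b : ℤ} (hab : a ≤ b) (ha : P a)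
    (hb : ¬P (b + 1)) : ∃ m ∈ Icc a b, P m ∧ ¬P (m + 1) := by
  by_contra! h
  have hP : ∀ m, a ≤ m → m ≤ b + 1 → P m := by
    intro m hm
    induction m, hm using Int.leInduction with
    | base => exact fun _ => ha
    | succ m hm ih => exact fun hmb => h m (mem_Icc.2 ⟨hm, by omega⟩) (ih (by omega))
  exact hb (hP _ (by omega) le_rfl)

theorem exists_zpow_two_half_le_of_le_of_lt {s r w : ℝ} (hs : 0 ≤ s) {a b : ℤ} (hab : a ≤ b)
    (hlo : s + 2 ^ a * r ≤ w) (hhi : w < s + 2 ^ (b + 1) * r) :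
    ∃ m ∈ Icc a b, s + 2 ^ m * r ≤ w ∧ w / 2 ≤ s + 2 ^ m * r := by
  obtain ⟨m, hm, hle, hlt⟩ :=
    Int.exists_mem_Icc_and_not_add_one (P := fun m => s + (2:ℝ) ^ m * r ≤ w) hab hlo hhi.not_ge
  rw [not_le, zpow_add_one₀ two_ne_zero] at hlt
  exact ⟨m, hm, hle, by linarith⟩

theorem four_mul_le_two_pow_natCeil_logb (n : ℕ) : 4 * n ≤ 2 ^ ⌈Real.logb 2 (4 * n)⌉₊ := by
  have h := Real.natCeil_logb_natCast 2 (4 * n)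
  push_cast at h
  rw [h]
  exact Nat.le_pow_clog one_lt_two _

theorem min_le_half_add_of_le_or_le {W S T R M : ℝ} (K : ℕ) (hM : 0 < M) (hT : 0 ≤ T)
    (hR : 0 ≤ R) (h : W / 4 ≤ R ∨ 2 ^ (K + 1) * S ≤ T) :
    min (W / (8 * M)) (2 ^ K * S) ≤ 1 / 2 * T + 1 / (2 * M) * R := by
  have hM' : 0 ≤ 1 / (2 * M) := by positivity
  rcases h with h | h
  · calc min (W / (8 * M)) (2 ^ K * S) ≤ 1 / (2 * M) * (W / 4) := by
          rw [show 1 / (2 * M) * (W / 4) = W / (8 * M) by field_simp; ring]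
          exact min_le_left _ _
      _ ≤ 1 / (2 * M) * R := mul_le_mul_of_nonneg_left h hM'
      _ ≤ _ := by linarith
  · have : 0 ≤ 1 / (2 * M) * R := mul_nonneg hM' hR
    calc min (W / (8 * M)) (2 ^ K * S) ≤ 2 ^ K * S := min_le_right _ _
      _ ≤ 1 / 2 * T := by rw [pow_succ] at h; linarith
      _ ≤ _ := by linarith

noncomputable def thresholdGrid (K L : ℕ) : Finset ℝ :=
  insert 0 (((Icc 1 L).image fun j => ((2:ℝ)⁻¹) ^ j) ∪ ((range (K + 1)).image fun k => (2:ℝ) ^ k))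

theorem zero_mem_thresholdGrid (K L : ℕ) : (0:ℝ) ∈ thresholdGrid K L := mem_insert_self _ _

theorem nonneg_of_mem_thresholdGrid {K L : ℕ} {α : ℝ} (hα : α ∈ thresholdGrid K L) : 0 ≤ α := by
  simp only [thresholdGrid, mem_insert, mem_union, mem_image] at hα
  rcases hα with rfl | ⟨j, -, rfl⟩ | ⟨k, -, rfl⟩ <;> positivity

theorem zpow_two_mem_thresholdGrid {K L : ℕ} {m : ℤ} (hL : -(L:ℤ) ≤ m) (hK : m ≤ K) :
    (2:ℝ) ^ m ∈ thresholdGrid K L := by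
  refine mem_insert_of_mem (mem_union.2 ?_)
  rcases le_or_gt 0 m with h0 | h0
  · refine .inr (mem_image.2 ⟨m.toNat, mem_range.2 (by omega), ?_⟩)
    rw [← zpow_natCast, Int.toNat_of_nonneg h0]
  · refine .inl (mem_image.2 ⟨(-m).toNat, mem_Icc.2 ⟨by omega, by omega⟩, ?_⟩)
    rw [inv_pow, ← zpow_natCast, Int.toNat_of_nonneg (by omega), zpow_neg, inv_inv]

namespace PeerMax

variable {ι : Type*} (w s r : ι → ℝ)

noncomputable def payment (α : ℝ) (i : ι) : ℝ := if s i + α * r i ≤ w i then s i + α * r i else 0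

noncomputable def revenue [Fintype ι] (α : ℝ) : ℝ := ∑ i, payment w s r α i

variable {w s r}

theorem payment_nonneg {i : ι} {α : ℝ} (hs : 0 ≤ s i) (hr : 0 ≤ r i) (hα : 0 ≤ α) :
    0 ≤ payment w s r α i := by
  unfold payment
  split_ifs <;> positivity

theorem half_le_sum_payment_thresholdGrid {K L : ℕ} {i : ι} (hs : 0 ≤ s i) (hr : 0 ≤ r i)
    (hlo : s i + 2 ^ (-(L:ℤ)) * r i ≤ w i) (hhi : w i < s i + 2 ^ (K + 1) * r i) :
    w i / 2 ≤ ∑ α ∈ thresholdGrid K L, payment w s r α i := by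
  have hhi' : w i < s i + 2 ^ ((K:ℤ) + 1) * r i := by exact_mod_cast hhi
  obtain ⟨m, hm, hle, hhalf⟩ := exists_zpow_two_half_le_of_le_of_lt hs (by omega) hlo hhi'
  rw [mem_Icc] at hm
  calc w i / 2 ≤ payment w s r (2 ^ m) i := by rwa [payment, if_pos hle]
    _ ≤ ∑ α ∈ thresholdGrid K L, payment w s r α i :=
      single_le_sum (fun α hα => payment_nonneg hs hr (nonneg_of_mem_thresholdGrid hα))
        (zpow_two_mem_thresholdGrid hm.1 hm.2)

variable [Fintype ι]

theorem payment_le_revenue {α : ℝ} (hs : ∀ i, 0 ≤ s i) (hr : ∀ i, 0 ≤ r i) (hα : 0 ≤ α)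
    (i : ι) : payment w s r α i ≤ revenue w s r α :=
  single_le_sum (fun j _ => payment_nonneg (hs j) (hr j) hα) (mem_univ i)

theorem revenue_nonneg {α : ℝ} (hs : ∀ i, 0 ≤ s i) (hr : ∀ i, 0 ≤ r i) (hα : 0 ≤ α) :
    0 ≤ revenue w s r α :=
  sum_nonneg fun i _ => payment_nonneg (hs i) (hr i) hα

theorem revenue_zero (hsw : ∀ i, s i ≤ w i) : revenue w s r 0 = ∑ i, s i :=
  sum_congr rfl fun i _ => by simp [payment, hsw i]

theorem sum_accepting_div_two_le_sum_revenue {K L : ℕ} (hs : ∀ i, 0 ≤ s i) (hr : ∀ i, 0 ≤ r i)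
    (hdom : ∀ i, w i < s i + 2 ^ (K + 1) * r i) :
    (∑ i with s i + 2 ^ (-(L:ℤ)) * r i ≤ w i, w i) / 2 ≤
      ∑ α ∈ thresholdGrid K L, revenue w s r α := by
  rw [sum_div]
  calc ∑ i with s i + 2 ^ (-(L:ℤ)) * r i ≤ w i, w i / 2
      ≤ ∑ i with s i + 2 ^ (-(L:ℤ)) * r i ≤ w i, ∑ α ∈ thresholdGrid K L, payment w s r α i :=
        sum_le_sum fun i hi =>
          half_le_sum_payment_thresholdGrid (hs i) (hr i) (mem_filter.1 hi).2 (hdom i)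
    _ ≤ ∑ i, ∑ α ∈ thresholdGrid K L, payment w s r α i :=
        sum_le_sum_of_subset_of_nonneg (filter_subset _ _) fun i _ _ =>
          sum_nonneg fun α hα => payment_nonneg (hs i) (hr i) (nonneg_of_mem_thresholdGrid hα)
    _ = ∑ α ∈ thresholdGrid K L, revenue w s r α := sum_comm

variable [DecidableEq ι]

theorem sum_le_peer (hsw : ∀ i, s i ≤ w i) (hr : ∀ i, r i = s i + ∑ j ∈ univ.erase i, w j)
    (i : ι) : ∑ j, s j ≤ r i := by
  rw [hr i, ← add_sum_erase _ s (mem_univ i)]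
  exact add_le_add_right (sum_le_sum fun j _ => hsw j) _

theorem peer_le_sum (hsw : ∀ i, s i ≤ w i) (hr : ∀ i, r i = s i + ∑ j ∈ univ.erase i, w j)
    (i : ι) : r i ≤ ∑ j, w j := by
  rw [hr i, ← add_sum_erase _ w (mem_univ i)]
  exact add_le_add_left (hsw i) _

theorem peer_nonneg (hs : ∀ i, 0 ≤ s i) (hsw : ∀ i, s i ≤ w i)
    (hr : ∀ i, r i = s i + ∑ j ∈ univ.erase i, w j) (i : ι) : 0 ≤ r i :=
  (sum_nonneg fun j _ => hs j).trans (sum_le_peer hsw hr i)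

theorem sum_rejecting_le {ε : ℝ} (hε : 0 ≤ ε) (hs : ∀ i, 0 ≤ s i) (hsw : ∀ i, s i ≤ w i)
    (hr : ∀ i, r i = s i + ∑ j ∈ univ.erase i, w j) :
    ∑ i with ¬(s i + ε * r i ≤ w i), w i ≤ ∑ i, s i + Fintype.card ι * ε * ∑ i, w i := by
  have hW : 0 ≤ ∑ j, w j := sum_nonneg fun j _ => (hs j).trans (hsw j)
  calc ∑ i with ¬(s i + ε * r i ≤ w i), w i
      ≤ ∑ i with ¬(s i + ε * r i ≤ w i), (s i + ε * ∑ j, w j) := by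
        refine sum_le_sum fun i hi => ?_
        have hreject := not_le.1 (mem_filter.1 hi).2
        have := mul_le_mul_of_nonneg_left (peer_le_sum hsw hr i) hε
        linarith
    _ ≤ ∑ i, (s i + ε * ∑ j, w j) :=
        sum_le_sum_of_subset_of_nonneg (filter_subset _ _)
          fun i _ _ => add_nonneg (hs i) (mul_nonneg hε hW)
    _ = ∑ i, s i + Fintype.card ι * ε * ∑ i, w i := by
        rw [sum_add_distrib, sum_const, card_univ, nsmul_eq_mul, mul_assoc]

theorem quarter_le_sum_revenue_or (K L : ℕ) (hs : ∀ i, 0 ≤ s i) (hsw : ∀ i, s i ≤ w i)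
    (hr : ∀ i, r i = s i + ∑ j ∈ univ.erase i, w j) (hL : 4 * Fintype.card ι ≤ 2 ^ L) :
    (∑ i, w i) / 4 ≤ ∑ α ∈ thresholdGrid K L, revenue w s r α ∨
      2 ^ (K + 1) * ∑ i, s i ≤ revenue w s r (2 ^ (K + 1)) := by
  have hr0 := peer_nonneg hs hsw hr
  by_cases hdom : ∃ i, s i + 2 ^ (K + 1) * r i ≤ w i
  · obtain ⟨i, hi⟩ := hdom
    right
    calc 2 ^ (K + 1) * ∑ i, s i ≤ 2 ^ (K + 1) * r i :=
          mul_le_mul_of_nonneg_left (sum_le_peer hsw hr i) (by positivity)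
      _ ≤ payment w s r (2 ^ (K + 1)) i := by rw [payment, if_pos hi]; linarith [hs i]
      _ ≤ revenue w s r (2 ^ (K + 1)) := payment_le_revenue hs hr0 (by positivity) i
  simp only [not_exists, not_le] at hdom
  left
  set ε : ℝ := 2 ^ (-(L:ℤ)) with hε
  have hzero : ∑ i, s i ≤ ∑ α ∈ thresholdGrid K L, revenue w s r α :=
    revenue_zero (r := r) hsw ▸ single_le_sum
      (fun α hα => revenue_nonneg hs hr0 (nonneg_of_mem_thresholdGrid hα))
      (zero_mem_thresholdGrid K L)
  have haccept := sum_accepting_div_two_le_sum_revenue hs hr0 hdom (L := L)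
  have hreject := sum_rejecting_le (by positivity) hs hsw hr (ε := ε)
  have hsplit := sum_filter_add_sum_filter_not univ (fun i => s i + ε * r i ≤ w i) w
  have hcard : (Fintype.card ι : ℝ) * ε ≤ 1 / 4 := by
    rw [hε, zpow_neg, zpow_natCast, ← div_eq_mul_inv, div_le_iff₀ (by positivity)]
    have : (4 * Fintype.card ι : ℝ) ≤ 2 ^ L := by exact_mod_cast hL
    linarith
  have hW : 0 ≤ ∑ j, w j := sum_nonneg fun j _ => (hs j).trans (hsw j)
  have := mul_le_mul_of_nonneg_right hcard hW
  linarith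

end PeerMax

open PeerMax in
theorem stmt16_general (n K L : ℕ)
    (hL : L = ⌈Real.logb 2 (4 * n)⌉₊)
    (w s r : Fin n → ℝ) (hs0 : ∀ i, 0 ≤ s i)
    (hsw : ∀ i, s i ≤ w i)
    (hr : ∀ i, r i = s i + ∑ j ∈ Finset.univ.erase i, w j)
    (W S : ℝ) (hW : W = ∑ i, w i) (hS : S = ∑ i, s i)
    (A : Finset ℝ)
    (hA : A = insert 0 (((Finset.Icc 1 L).image fun j => ((2:ℝ)⁻¹) ^ j) ∪
      ((Finset.range (K + 1)).image fun k => (2:ℝ) ^ k)))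
    (REV : ℝ → ℝ)
    (hREV : ∀ α, REV α = ∑ i, if s i + α * r i ≤ w i then s i + α * r i else 0) :
    min (W / (8 * ((K : ℝ) + L + 1))) ((2:ℝ) ^ K * S) ≤
      (1 / 2) * REV ((2:ℝ) ^ (K + 1)) + (1 / (2 * ((K : ℝ) + L + 1))) * ∑ α ∈ A, REV α := by
  obtain rfl : A = thresholdGrid K L := hA
  obtain rfl : REV = revenue w s r := funext hREV
  have hcard : 4 * Fintype.card (Fin n) ≤ 2 ^ L := by
    rw [Fintype.card_fin, hL]
    exact four_mul_le_two_pow_natCeil_logb n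
  have hr0 := peer_nonneg hs0 hsw hr
  subst hW hS
  exact min_le_half_add_of_le_or_le K (by positivity) (revenue_nonneg hs0 hr0 (by positivity))
    (sum_nonneg fun α hα => revenue_nonneg hs0 hr0 (nonneg_of_mem_thresholdGrid hα))
    (quarter_le_sum_revenue_or K L hs0 hsw hr hcard)

theorem stmt16 (n K L : ℕ) (hn : 2 ≤ n) (hK : 1 ≤ K)
    (hL : L = ⌈Real.logb 2 (4 * n)⌉₊)
    (w s r : Fin n → ℝ) (hw0 : ∀ i, 0 ≤ w i) (hs0 : ∀ i, 0 ≤ s i)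
    (hr0 : ∀ i, 0 ≤ r i) (hsw : ∀ i, s i ≤ w i)
    (hr : ∀ i, r i = s i + ∑ j ∈ Finset.univ.erase i, w j)
    (W S : ℝ) (hW : W = ∑ i, w i) (hS : S = ∑ i, s i)
    (A : Finset ℝ)
    (hA : A = insert 0 (((Finset.Icc 1 L).image fun j => ((2:ℝ)⁻¹) ^ j) ∪
      ((Finset.range (K + 1)).image fun k => (2:ℝ) ^ k)))
    (REV : ℝ → ℝ)
    (hREV : ∀ α, REV α = ∑ i, if s i + α * r i ≤ w i then s i + α * r i else 0) :
    min (W / (8 * ((K : ℝ) + L + 1))) ((2:ℝ) ^ K * S) ≤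
      (1 / 2) * REV ((2:ℝ) ^ (K + 1)) + (1 / (2 * ((K : ℝ) + L + 1))) * ∑ α ∈ A, REV α :=
  stmt16_general n K L hL w s r hs0 hsw hr W S hW hS A hA REV hREV
end

section
/- Let M = (x̃, p̃) be a single-item bid-reporting mechanism on bid space A ⊆ ℝ₊ satisfying: for all i, all a_{-i} ∈ A^{n-1}, and all a_i, a_i' ∈ A, a_i·x̃_i(a_i, a_{-i}) - p̃_i(a_i, a_{-i}) ≥ a_i·x̃_i(a_i', a_{-i}) - p̃_i(a_i', a_{-i}) (IC), allocations x̃_i ∈ [0,1] summing to at most 1, and ex-post nonnegative truthful utility (IR). Let L ≥ 1, δ = 1/(2^{L+1}-2), A = {2^{-j} : j = 1,...,L}, and let a_1, ..., a_n be i.i.d. with Pr[a_i = 2^{-j}] = δ·2^j. Then E[∑_i p̃_i(a_1,...,a_n)] ≤ 2nδ. -/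
/-!
Fix a buyer and the other bids. Writing `q j`, `y j` for the buyer's payment and allocation at
bid `2⁻¹ ^ j`, incentive compatibility between adjacent bids makes `y` monotone and gives
`q j - q (j + 1) ≤ 2⁻¹ ^ j * (y j - y (j + 1))`, while individual rationality bounds `q L`.
Abel summation then dominates the expected payment by a mixture, with weights `y j - y (j + 1)`,
of the posted prices `2⁻¹ ^ k`, each of which earns `2⁻¹ ^ k * ∑ j ∈ Icc 1 k, δ * 2 ^ j ≤ 2 * δ`.
Independence lets one buyer's bid be resampled while the others stay fixed, so every buyer
contributes at most `2 * δ`.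
-/

open MeasureTheory ProbabilityTheory Finset Function

theorem integral_comp_eq_sum_of_forall_mem {Ω β : Type*} [MeasurableSpace Ω] [MeasurableSpace β]
    [MeasurableSingletonClass β] {μ : Measure Ω} [IsFiniteMeasure μ] {X : Ω → β}
    (hX : Measurable X) {s : Finset β} (hs : ∀ ω, X ω ∈ s) (f : β → ℝ) :
    ∫ ω, f (X ω) ∂μ = ∑ b ∈ s, μ.real (X ⁻¹' {b}) * f b := by
  have hfiber : ∀ ω, f (X ω) = ∑ b ∈ s, (X ⁻¹' {b}).indicator (fun _ => f b) ω := fun ω => by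
    classical
    simp [Set.indicator_apply, hs ω]
  have hmeas : ∀ b, MeasurableSet (X ⁻¹' {b}) := fun b => hX (measurableSet_singleton b)
  simp_rw [hfiber]
  rw [integral_finsetSum _ fun b _ => (integrable_const _).indicator (hmeas b)]
  simp_rw [integral_indicator_const _ (hmeas _), smul_eq_mul]

theorem ProbabilityTheory.iIndepFun.integral_comp_eq_sum_prod {ι Ω β : Type*} [Fintype ι]
    [DecidableEq ι] [MeasurableSpace Ω] [MeasurableSpace β] [MeasurableSingletonClass β]
    {μ : Measure Ω} [IsFiniteMeasure μ] {a : ι → Ω → β} (hmeas : ∀ i, Measurable (a i)) (hindep : iIndepFun a μ)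
    {t : ι → Finset β} (ht : ∀ i ω, a i ω ∈ t i) (f : (ι → β) → ℝ) :
    ∫ ω, f (fun i => a i ω) ∂μ =
      ∑ b ∈ Fintype.piFinset t, (∏ i, μ.real (a i ⁻¹' {b i})) * f b := by
  rw [integral_comp_eq_sum_of_forall_mem (measurable_pi_lambda _ hmeas)
    (fun ω => Fintype.mem_piFinset.2 fun i => ht i ω)]
  refine sum_congr rfl fun b _ => ?_
  have hfiber : (fun ω i => a i ω) ⁻¹' {b} = ⋂ i ∈ (univ : Finset ι), a i ⁻¹' {b i} := by
    ext ω; simp [funext_iff]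
  rw [hfiber, measureReal_def, hindep.measure_inter_preimage_eq_mul _
    fun i _ => measurableSet_singleton _, ENNReal.toReal_prod]
  rfl

theorem sum_piFinset_prod_mul_eq_resample {ι α R : Type*} [Fintype ι] [DecidableEq ι]
    [CommSemiring R] (t : ι → Finset α) (P : ι → α → R) (g : (ι → α) → R) (i : ι) :
    (∑ x ∈ t i, P i x) * ∑ b ∈ Fintype.piFinset t, (∏ k, P k (b k)) * g b =
      ∑ b ∈ Fintype.piFinset t, (∏ k, P k (b k)) * ∑ x ∈ t i, P i x * g (update b i x) := by
  have hprod : ∀ (b : ι → α) x, (∏ k, P k (update b i x k)) * P i (b i) =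
      (∏ k, P k (b k)) * P i x := fun b x => by
    simp_rw [apply_update (fun k => P k), prod_update_of_mem (mem_univ i)]
    rw [prod_eq_mul_prod_sdiff_singleton i (fun k => P k (b k)) fun h => absurd (mem_univ i) h]
    ring
  have hupd : ∀ b ∈ Fintype.piFinset t, ∀ x ∈ t i, update b i x ∈ Fintype.piFinset t :=
    fun b hb x hx => Fintype.mem_piFinset.2 fun k => by
      rcases eq_or_ne k i with rfl | hk
      · simpa
      · simpa [hk] using Fintype.mem_piFinset.1 hb k
  rw [sum_mul_sum, ← sum_product']
  simp_rw [mul_sum]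
  rw [← sum_product']
  -- `(x, b) ↦ (update b i x, b i)` swaps the resampled bid with the original one.
  refine sum_nbij' (fun p => (update p.2 i p.1, p.2 i)) (fun p => (p.1 i, update p.1 i p.2))
    ?_ ?_ ?_ ?_ ?_
  · simp only [mem_product]
    rintro ⟨x, b⟩ ⟨hx, hb⟩
    exact ⟨hupd b hb x hx, Fintype.mem_piFinset.1 hb i⟩
  · simp only [mem_product]
    rintro ⟨b, y⟩ ⟨hb, hy⟩
    exact ⟨Fintype.mem_piFinset.1 hb i, hupd b hb y hy⟩
  · rintro ⟨x, b⟩ -; simp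
  · rintro ⟨b, y⟩ -; simp
  · rintro ⟨x, b⟩ -
    simp only [update_idem, update_eq_self]
    rw [← mul_assoc, ← mul_assoc, hprod, mul_comm (P i x)]

theorem sum_piFinset_prod_mul_le {ι α : Type*} [Fintype ι] [DecidableEq ι] {t : ι → Finset α}
    {P : ι → α → ℝ} (hP0 : ∀ k, ∀ x ∈ t k, 0 ≤ P k x) (hP1 : ∀ k, ∑ x ∈ t k, P k x = 1)
    {g : (ι → α) → ℝ} (i : ι) {R : ℝ}
    (hg : ∀ b ∈ Fintype.piFinset t, ∑ x ∈ t i, P i x * g (update b i x) ≤ R) :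
    ∑ b ∈ Fintype.piFinset t, (∏ k, P k (b k)) * g b ≤ R := by
  have hweight : ∀ b ∈ Fintype.piFinset t, 0 ≤ ∏ k, P k (b k) := fun b hb =>
    prod_nonneg fun k _ => hP0 k (b k) (Fintype.mem_piFinset.1 hb k)
  calc ∑ b ∈ Fintype.piFinset t, (∏ k, P k (b k)) * g b
      = ∑ b ∈ Fintype.piFinset t, (∏ k, P k (b k)) * ∑ x ∈ t i, P i x * g (update b i x) := by
        rw [← sum_piFinset_prod_mul_eq_resample, hP1, one_mul]
    _ ≤ ∑ b ∈ Fintype.piFinset t, (∏ k, P k (b k)) * R :=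
        sum_le_sum fun b hb => mul_le_mul_of_nonneg_left (hg b hb) (hweight b hb)
    _ = R := by rw [← sum_mul, ← prod_univ_sum, prod_eq_one fun k _ => hP1 k, one_mul]

theorem sum_Icc_mul_le_of_adjacent_payment_le {L : ℕ} {w v q y : ℕ → ℝ} {R : ℝ} (hw : ∀ j, 0 ≤ w j)
    (hR : ∀ k ∈ Icc 1 L, v k * ∑ j ∈ Icc 1 k, w j ≤ R)
    (hy : ∀ j ∈ Ico 1 L, y (j + 1) ≤ y j)
    (hq : ∀ j ∈ Ico 1 L, q j ≤ q (j + 1) + v j * (y j - y (j + 1))) {m : ℕ} (hm : m ∈ Icc 1 L) :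
    ∑ j ∈ Icc 1 m, w j * q j ≤ (∑ j ∈ Icc 1 m, w j) * q m + R * (y 1 - y m) := by
  obtain ⟨h1m, hmL⟩ := mem_Icc.1 hm
  clear hm
  induction m, h1m using Nat.le_induction with
  | base => simp
  | succ m h1m ih =>
    have hmIco : m ∈ Ico 1 L := mem_Ico.2 ⟨h1m, hmL⟩
    have hW : 0 ≤ ∑ j ∈ Icc 1 m, w j := sum_nonneg fun j _ => hw j
    have hpay := mul_le_mul_of_nonneg_left (hq m hmIco) hW
    have hgap := mul_le_mul_of_nonneg_right (hR m (Ico_subset_Icc_self hmIco))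
      (sub_nonneg.2 (hy m hmIco))
    rw [sum_Icc_succ_top (by omega), sum_Icc_succ_top (by omega)]
    linarith [ih (by omega)]

theorem sum_Icc_mul_le_of_incentive_compatible {L : ℕ} (hL : 1 ≤ L) {w v q y : ℕ → ℝ} {R : ℝ}
    (hw : ∀ j, 0 ≤ w j) (hv : ∀ j ∈ Ico 1 L, v (j + 1) < v j)
    (hR : ∀ k ∈ Icc 1 L, v k * ∑ j ∈ Icc 1 k, w j ≤ R)
    (hIC : ∀ j ∈ Icc 1 L, ∀ j' ∈ Icc 1 L, v j * y j' - q j' ≤ v j * y j - q j)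
    (hIR : 0 ≤ v L * y L - q L) (hyL : 0 ≤ y L) :
    ∑ j ∈ Icc 1 L, w j * q j ≤ R * y 1 := by
  have hIC_next : ∀ j ∈ Ico 1 L, v j * y (j + 1) - q (j + 1) ≤ v j * y j - q j ∧
      v (j + 1) * y j - q j ≤ v (j + 1) * y (j + 1) - q (j + 1) := fun j hj => by
    have hj : j ∈ Icc 1 L := Ico_subset_Icc_self hj
    have hj1 : j + 1 ∈ Icc 1 L := by simp only [mem_Icc, mem_Ico] at *; omega
    exact ⟨hIC j hj (j + 1) hj1, hIC (j + 1) hj1 j hj⟩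
  have hy : ∀ j ∈ Ico 1 L, y (j + 1) ≤ y j := fun j hj => by
    obtain ⟨h₁, h₂⟩ := hIC_next j hj
    nlinarith [hv j hj]
  have hq : ∀ j ∈ Ico 1 L, q j ≤ q (j + 1) + v j * (y j - y (j + 1)) := fun j hj => by
    linarith [(hIC_next j hj).1]
  have hL' : L ∈ Icc 1 L := mem_Icc.2 ⟨hL, le_rfl⟩
  have hW : 0 ≤ ∑ j ∈ Icc 1 L, w j := sum_nonneg fun j _ => hw j
  have hlast := mul_le_mul_of_nonneg_left (sub_nonneg.1 hIR) hW
  have htop := mul_le_mul_of_nonneg_right (hR L hL') hyL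
  linarith [sum_Icc_mul_le_of_adjacent_payment_le hw hR hy hq hL']

theorem sum_Icc_two_pow (k : ℕ) : ∑ j ∈ Icc 1 k, (2 : ℝ) ^ j = 2 ^ (k + 1) - 2 := by
  induction k with
  | zero => simp
  | succ k ih => rw [sum_Icc_succ_top (by omega), ih]; ring

theorem inv_two_pow_mul_sum_Icc_two_pow_le (k : ℕ) :
    (2⁻¹ : ℝ) ^ k * ∑ j ∈ Icc 1 k, (2 : ℝ) ^ j ≤ 2 := by
  rw [sum_Icc_two_pow, mul_sub, pow_succ, ← mul_assoc, ← mul_pow, inv_mul_cancel₀ two_ne_zero,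
    one_pow, one_mul]
  linarith [show 0 ≤ (2⁻¹ : ℝ) ^ k * 2 by positivity]

theorem sum_Icc_mul_payment_update_le {ι : Type*} [DecidableEq ι] {L : ℕ} (hL : 1 ≤ L) {δ : ℝ}
    (hδ : 0 ≤ δ) {A : Set ℝ} (hA : ∀ j ∈ Icc 1 L, (2⁻¹ : ℝ) ^ j ∈ A)
    {x p : ι → (ι → ℝ) → ℝ} (hx01 : ∀ i b, x i b ∈ Set.Icc (0 : ℝ) 1)
    (hIC : ∀ (i : ι) (b : ι → ℝ), (∀ k, b k ∈ A) → ∀ b' ∈ A,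
      b i * x i (update b i b') - p i (update b i b') ≤ b i * x i b - p i b)
    (hIR : ∀ (i : ι) (b : ι → ℝ), (∀ k, b k ∈ A) → 0 ≤ b i * x i b - p i b)
    (i : ι) {b : ι → ℝ} (hb : ∀ k, b k ∈ A) :
    ∑ j ∈ Icc 1 L, δ * 2 ^ j * p i (update b i ((2⁻¹ : ℝ) ^ j)) ≤ 2 * δ := by
  have hbj : ∀ j ∈ Icc 1 L, ∀ k, update b i ((2⁻¹ : ℝ) ^ j) k ∈ A := fun j hj =>
    (forall_update_iff _ fun k y => y ∈ A).2 ⟨hA j hj, fun k _ => hb k⟩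
  have hv : ∀ j ∈ Ico 1 L, (2⁻¹ : ℝ) ^ (j + 1) < 2⁻¹ ^ j := fun j _ =>
    pow_lt_pow_right_of_lt_one₀ (by norm_num) (by norm_num) (Nat.lt_succ_self j)
  have hR : ∀ k ∈ Icc 1 L, (2⁻¹ : ℝ) ^ k * ∑ j ∈ Icc 1 k, δ * 2 ^ j ≤ 2 * δ := fun k _ => by
    rw [← mul_sum, mul_left_comm]
    linarith [mul_le_mul_of_nonneg_left (inv_two_pow_mul_sum_Icc_two_pow_le k) hδ]
  have hICj : ∀ j ∈ Icc 1 L, ∀ j' ∈ Icc 1 L,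
      2⁻¹ ^ j * x i (update b i (2⁻¹ ^ j')) - p i (update b i (2⁻¹ ^ j')) ≤
        2⁻¹ ^ j * x i (update b i (2⁻¹ ^ j)) - p i (update b i (2⁻¹ ^ j)) :=
    fun j hj j' hj' => by
      simpa only [update_self, update_idem] using hIC i _ (hbj j hj) _ (hA j' hj')
  have hIRL : 0 ≤ 2⁻¹ ^ L * x i (update b i (2⁻¹ ^ L)) - p i (update b i (2⁻¹ ^ L)) := by
    simpa only [update_self] using hIR i _ (hbj L (mem_Icc.2 ⟨hL, le_rfl⟩))
  calc _ ≤ 2 * δ * x i (update b i ((2⁻¹ : ℝ) ^ 1)) :=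
        sum_Icc_mul_le_of_incentive_compatible hL (fun j => by positivity) hv hR hICj hIRL
          (hx01 _ _).1
    _ ≤ 2 * δ := mul_le_of_le_one_right (by positivity) (hx01 _ _).2

theorem stmt18_general {Ω : Type*} [MeasurableSpace Ω] (μ : Measure Ω) [IsProbabilityMeasure μ]
    (n L : ℕ) (hL : 1 ≤ L) (δ : ℝ) (hδ : δ = 1 / ((2:ℝ) ^ (L + 1) - 2))
    (A : Set ℝ) (hA : A = {x : ℝ | ∃ j ∈ Finset.Icc 1 L, x = ((2:ℝ)⁻¹) ^ j})
    (x p : Fin n → (Fin n → ℝ) → ℝ)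
    (hx01 : ∀ i b, x i b ∈ Set.Icc (0:ℝ) 1)
    (hIC : ∀ (i : Fin n) (b : Fin n → ℝ), (∀ k, b k ∈ A) → ∀ b' ∈ A,
      b i * x i (Function.update b i b') - p i (Function.update b i b') ≤
        b i * x i b - p i b)
    (hIR : ∀ (i : Fin n) (b : Fin n → ℝ), (∀ k, b k ∈ A) → 0 ≤ b i * x i b - p i b)
    (a : Fin n → Ω → ℝ) (hmeas : ∀ i, Measurable (a i))
    (hindep : iIndepFun a μ)
    (hsupp : ∀ i ω, a i ω ∈ A)
    (hprob : ∀ i, ∀ j ∈ Finset.Icc 1 L,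
      μ {ω | a i ω = ((2:ℝ)⁻¹) ^ j} = ENNReal.ofReal (δ * 2 ^ j)) :
    (∫ ω, ∑ i, p i (fun k => a k ω) ∂μ) ≤ 2 * n * δ := by
  have hδ0 : 0 ≤ δ := hδ ▸ one_div_nonneg.2 (sub_nonneg.2 (le_self_pow₀ one_le_two (by omega)))
  set V : Finset ℝ := (Icc 1 L).image fun j => (2⁻¹ : ℝ) ^ j
  have hAV : A = V := by rw [hA]; ext; simp [V, eq_comm]
  have hVA : ∀ j ∈ Icc 1 L, (2⁻¹ : ℝ) ^ j ∈ A := fun j hj => hA ▸ ⟨j, hj, rfl⟩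
  have haV : ∀ k ω, a k ω ∈ V := fun k ω => mem_coe.1 (hAV ▸ hsupp k ω)
  have hlaw : ∀ k, ∀ j ∈ Icc 1 L, μ.real (a k ⁻¹' {(2⁻¹ : ℝ) ^ j}) = δ * 2 ^ j := fun k j hj =>
    (congrArg ENNReal.toReal (hprob k j hj)).trans (ENNReal.toReal_ofReal (by positivity))
  have hlaw_sum : ∀ k, ∑ y ∈ V, μ.real (a k ⁻¹' {y}) = 1 := fun k => by
    have hfull : a k ⁻¹' V = Set.univ := Set.eq_univ_of_forall fun ω => mem_coe.2 (haV k ω)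
    rw [sum_measureReal_preimage_singleton _ fun y _ => hmeas k (measurableSet_singleton y),
      hfull, probReal_univ]
  have hbuyer : ∀ i, ∀ b ∈ Fintype.piFinset fun _ => V,
      ∑ y ∈ V, μ.real (a i ⁻¹' {y}) * p i (update b i y) ≤ 2 * δ := fun i b hb => by
    rw [sum_image fun j _ j' _ h => pow_right_injective₀ (by norm_num) (by norm_num) h]
    calc _ = ∑ j ∈ Icc 1 L, δ * 2 ^ j * p i (update b i ((2⁻¹ : ℝ) ^ j)) :=
          sum_congr rfl fun j hj => by rw [hlaw i j hj]
      _ ≤ 2 * δ := sum_Icc_mul_payment_update_le hL hδ0 hVA hx01 hIC hIR i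
          fun k => hAV ▸ Fintype.mem_piFinset.1 hb k
  rw [hindep.integral_comp_eq_sum_prod hmeas haV (fun b => ∑ i, p i b)]
  simp_rw [mul_sum]
  rw [sum_comm]
  calc _ ≤ ∑ _i : Fin n, 2 * δ := sum_le_sum fun i _ =>
        sum_piFinset_prod_mul_le (fun _ _ _ => measureReal_nonneg) hlaw_sum i (hbuyer i)
    _ = 2 * n * δ := by simp; ring

theorem stmt18 {Ω : Type*} [MeasurableSpace Ω] (μ : Measure Ω) [IsProbabilityMeasure μ]
    (n L : ℕ) (hL : 1 ≤ L) (δ : ℝ) (hδ : δ = 1 / ((2:ℝ) ^ (L + 1) - 2))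
    (A : Set ℝ) (hA : A = {x : ℝ | ∃ j ∈ Finset.Icc 1 L, x = ((2:ℝ)⁻¹) ^ j})
    (x p : Fin n → (Fin n → ℝ) → ℝ)
    (hx01 : ∀ i b, x i b ∈ Set.Icc (0:ℝ) 1)
    (hfeas : ∀ b, ∑ i, x i b ≤ 1)
    (hIC : ∀ (i : Fin n) (b : Fin n → ℝ), (∀ k, b k ∈ A) → ∀ b' ∈ A,
      b i * x i (Function.update b i b') - p i (Function.update b i b') ≤
        b i * x i b - p i b)
    (hIR : ∀ (i : Fin n) (b : Fin n → ℝ), (∀ k, b k ∈ A) → 0 ≤ b i * x i b - p i b)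
    (a : Fin n → Ω → ℝ) (hmeas : ∀ i, Measurable (a i))
    (hindep : iIndepFun a μ)
    (hsupp : ∀ i ω, a i ω ∈ A)
    (hprob : ∀ i, ∀ j ∈ Finset.Icc 1 L,
      μ {ω | a i ω = ((2:ℝ)⁻¹) ^ j} = ENNReal.ofReal (δ * 2 ^ j))
    (hint : Integrable (fun ω => ∑ i, p i (fun k => a k ω)) μ) :
    (∫ ω, ∑ i, p i (fun k => a k ω) ∂μ) ≤ 2 * n * δ :=
  stmt18_general μ n L hL δ hδ A hA x p hx01 hIC hIR a hmeas hindep hsupp hprob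
end
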